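/- arXiv:1712.05237 — 3 statements merged into one kernel-verified Lean document; each statement's English description precedes it below -/
import Mathlib

section
/- Let X be a set with a normal sequence of covers (𝒰ₙ)ₙ and let d be the associated pseudo-metric (d(x,y) = inf of chain sums of ρ, where ρ(x,y) = 2^{-n(x,y)}). Then for every x ∈ X and every n ≥ 0, st({x}, 𝒰ₙ₊₁) ⊆ B_d(x, 2^{-n}) ⊆ st({x}, 𝒰ₙ), where B_d(x, r) denotes the open d-ball of radius r around x. -/
open scoped Classical

variable {X : Type*}

/-- The star of a set `A` against a cover `𝒞`. -/
def starOf (A : Set X) (𝒞 : Set (Set X)) : Set X :=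
  ⋃₀ {U ∈ 𝒞 | (U ∩ A).Nonempty}

/-- A cover `𝒞` refines `𝒟` if every member of `𝒞` is contained in a member of `𝒟`. -/
def Refines (𝒞 𝒟 : Set (Set X)) : Prop :=
  ∀ U ∈ 𝒞, ∃ V ∈ 𝒟, U ⊆ V

/-- `𝒞` star-refines `𝒟`: the stars of members of `𝒞` against `𝒞` refine `𝒟`. -/
def StarRefines (𝒞 𝒟 : Set (Set X)) : Prop :=
  ∀ U ∈ 𝒞, ∃ V ∈ 𝒟, starOf U 𝒞 ⊆ V

/-- A normal sequence of covers: each `𝒰 (n+1)` star-refines `𝒰 n`. -/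
def IsNormalSeq (𝒰 : ℕ → Set (Set X)) : Prop :=
  (∀ n, ⋃₀ 𝒰 n = Set.univ) ∧ ∀ n, StarRefines (𝒰 (n + 1)) (𝒰 n)

/-- The set of levels `k` at which `x` and `y` lie in a common member of `𝒰 k`. -/
def sharedLevels (𝒰 : ℕ → Set (Set X)) (x y : X) : Set ℕ :=
  {k : ℕ | ∃ U ∈ 𝒰 k, x ∈ U ∧ y ∈ U}

/-- `ρ(x,y) = 2 ^ (-n(x,y))`, where `n(x,y)` is the largest level at which `x, y`
lie in a common member of the cover (`0` if there are arbitrarily large such levels,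
interpreting `2 ^ (-∞) = 0`). -/
noncomputable def rhoOf (𝒰 : ℕ → Set (Set X)) (x y : X) : ℝ :=
  if BddAbove (sharedLevels 𝒰 x y) then
    (if (sharedLevels 𝒰 x y).Nonempty then
      (2 : ℝ) ^ (-((sSup (sharedLevels 𝒰 x y) : ℕ) : ℤ)) else 1)
  else 0

/-- The sum of `ρ` along consecutive members of a chain. -/
noncomputable def chainSum (ρ : X → X → ℝ) : List X → ℝ
  | a :: b :: t => ρ a b + chainSum ρ (b :: t)
  | _ => 0

/-- The pseudo-metric associated to a normal sequence of covers:
`d(x,y)` is the infimum of the `ρ`-sums over all finite chains from `x` to `y`. -/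
noncomputable def dOf (𝒰 : ℕ → Set (Set X)) (x y : X) : ℝ :=
  sInf {s : ℝ | ∃ l : List X, l.head? = some x ∧ l.getLast? = some y ∧
    s = chainSum (rhoOf 𝒰) l}

lemma rhoOf_nonneg (𝒰 : ℕ → Set (Set X)) (x y : X) : 0 ≤ rhoOf 𝒰 x y := by
  unfold rhoOf
  split_ifs <;> positivity

lemma chainSum_nonneg (𝒰 : ℕ → Set (Set X)) : ∀ l : List X, 0 ≤ chainSum (rhoOf 𝒰) l
  | [] => le_refl 0
  | [_] => le_refl 0
  | a :: b :: t => by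
      have h1 := rhoOf_nonneg 𝒰 a b
      have h2 := chainSum_nonneg 𝒰 (b :: t)
      simp only [chainSum]; linarith

lemma refines_le (𝒰 : ℕ → Set (Set X)) (h : IsNormalSeq 𝒰) {n m : ℕ} (hnm : n ≤ m) :
    Refines (𝒰 m) (𝒰 n) := by
  induction m, hnm using Nat.le_induction with
  | base => exact fun U hU => ⟨U, hU, le_refl _⟩
  | succ m hm ih =>
    intro U hU
    obtain ⟨V, hV, hUV⟩ := h.2 m U hU
    obtain ⟨W, hW, hVW⟩ := ih V hV
    refine ⟨W, hW, fun u hu => hVW (hUV ?_)⟩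
    exact ⟨U, ⟨hU, ⟨u, hu, hu⟩⟩, hu⟩

lemma rho_lt (𝒰 : ℕ → Set (Set X)) (h : IsNormalSeq 𝒰) {a b : X} {n : ℕ}
    (hlt : rhoOf 𝒰 a b < (2:ℝ) ^ (-(n:ℤ))) : ∃ U ∈ 𝒰 (n+1), a ∈ U ∧ b ∈ U := by
  unfold rhoOf at hlt
  split_ifs at hlt with hB hne
  · have hsup : (n:ℤ) < ((sSup (sharedLevels 𝒰 a b) : ℕ) : ℤ) := by
      by_contra hcon
      push_neg at hcon
      have : (2:ℝ) ^ (-(n:ℤ)) ≤ 2 ^ (-((sSup (sharedLevels 𝒰 a b) : ℕ) : ℤ)) := by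
        apply zpow_le_zpow_right₀ (by norm_num) (by omega)
      linarith
    have hmem : sSup (sharedLevels 𝒰 a b) ∈ sharedLevels 𝒰 a b := Nat.sSup_mem hne hB
    obtain ⟨U, hU, haU, hbU⟩ := hmem
    have hle : n + 1 ≤ sSup (sharedLevels 𝒰 a b) := by exact_mod_cast hsup
    obtain ⟨V, hV, hUV⟩ := refines_le 𝒰 h hle U hU
    exact ⟨V, hV, hUV haU, hUV hbU⟩
  · exfalso
    have : (2:ℝ) ^ (-(n:ℤ)) ≤ 1 := by
      calc (2:ℝ) ^ (-(n:ℤ)) ≤ 2 ^ (0:ℤ) := zpow_le_zpow_right₀ (by norm_num) (by omega)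
      _ = 1 := by norm_num
    linarith
  · obtain ⟨k, hk, hkle⟩ := (not_bddAbove_iff'.mp hB) n
    obtain ⟨U, hU, haU, hbU⟩ := hk
    obtain ⟨V, hV, hUV⟩ := refines_le 𝒰 h (show n + 1 ≤ k by omega) U hU
    exact ⟨V, hV, hUV haU, hUV hbU⟩

lemma chainSum_split (ρ : X → X → ℝ) (hρ : ∀ a b, 0 ≤ ρ a b) :
    ∀ (l : List X), 2 ≤ l.length → ∀ B₁ B₂ : ℝ, 0 ≤ B₁ → 0 ≤ B₂ →
    chainSum ρ l ≤ B₁ + B₂ →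
    ∃ (p q : List X) (u v : X), l = p ++ q ∧ p ≠ [] ∧ q ≠ [] ∧
      p.getLast? = some u ∧ q.head? = some v ∧
      chainSum ρ p ≤ B₁ ∧ chainSum ρ q ≤ B₂ ∧
      chainSum ρ l = chainSum ρ p + ρ u v + chainSum ρ q := by
  intro l
  induction l with
  | nil => intro h; simp at h
  | cons a rest ih =>
    intro hlen B₁ B₂ hB₁ hB₂ hsum
    match rest, hlen with
    | b :: t, _ =>
      by_cases hcase : chainSum ρ (b :: t) ≤ B₂
      · refine ⟨[a], b :: t, a, b, rfl, by simp, by simp, rfl, rfl, ?_, hcase, ?_⟩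
        · simpa [chainSum] using hB₁
        · simp [chainSum]
      · push_neg at hcase
        have hsum' : chainSum ρ (a :: b :: t) = ρ a b + chainSum ρ (b :: t) := rfl
        have htne : t ≠ [] := by
          rintro rfl
          simp [chainSum] at hcase
          linarith
        have hlen2 : 2 ≤ (b :: t).length := by
          cases t with | nil => simp at htne | cons c t' => simp
        have hedge : ρ a b ≤ B₁ := by
          have := hρ a b
          linarith [hsum' ▸ hsum]
        obtain ⟨p', q', u, v, heq, hpne, hqne, hlast, hhead, hp', hq', hsumeq⟩ :=
          ih hlen2 (B₁ - ρ a b) B₂ (by linarith) hB₂ (by rw [hsum'] at hsum; linarith)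
        have hheadp' : p'.head? = some b := by
          have : (p' ++ q').head? = some b := by rw [← heq]; rfl
          rwa [List.head?_append_of_ne_nil _ hpne] at this
        obtain ⟨p'', rfl⟩ : ∃ p'', p' = b :: p'' := by
          cases p' with
          | nil => simp at hpne
          | cons c tl => simp at hheadp'; exact ⟨tl, by rw [hheadp']⟩
        refine ⟨a :: b :: p'', q', u, v, by rw [heq]; rfl, by simp, hqne, ?_, hhead, ?_, hq', ?_⟩
        · rw [← hlast]; simp
        · have : chainSum ρ (a :: b :: p'') = ρ a b + chainSum ρ (b :: p'') := rfl
          rw [this]; linarith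
        · have h1 : chainSum ρ (a :: b :: p'') = ρ a b + chainSum ρ (b :: p'') := rfl
          rw [hsum', hsumeq, h1]; ring

lemma chain_key (𝒰 : ℕ → Set (Set X)) (h : IsNormalSeq 𝒰) :
    ∀ (m : ℕ) (l : List X), l.length ≤ m → ∀ (n : ℕ) (a b : X),
      l.head? = some a → l.getLast? = some b →
      chainSum (rhoOf 𝒰) l < (2:ℝ) ^ (-(n:ℤ)) →
      ∃ U ∈ 𝒰 n, a ∈ U ∧ b ∈ U := by
  intro m
  induction m with
  | zero =>
    intro l hl
    interval_cases hlen : l.length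
    · intro n a b ha; rw [List.length_eq_zero_iff] at hlen; subst hlen; simp at ha
  | succ m ih =>
    intro l hl n a b ha hb hsum
    cases l with
    | nil => simp at ha
    | cons a' rest =>
      have ha' : a = a' := by simpa using ha.symm
      subst ha'
      cases rest with
      | nil =>
        have hba : a = b := by simpa using hb
        have hcov := h.1 n
        have hmem : a ∈ ⋃₀ 𝒰 n := by rw [hcov]; trivial
        obtain ⟨U, hU, haU⟩ := hmem
        exact ⟨U, hU, haU, hba ▸ haU⟩
      | cons c t =>
        set S := chainSum (rhoOf 𝒰) (a :: c :: t) with hSdef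
        have hS0 : 0 ≤ S := chainSum_nonneg 𝒰 (a :: c :: t)
        have hhalf : S / 2 < (2:ℝ) ^ (-((n:ℤ)+1)) := by
          have h2 : ((2:ℝ) ^ (-((n:ℤ)+1))) * 2 = 2 ^ (-(n:ℤ)) := by
            rw [← zpow_add_one₀ (by norm_num : (2:ℝ) ≠ 0)]; ring_nf
          linarith
        have hcast : (-((n:ℤ)+1)) = -(((n+1 : ℕ)):ℤ) := by push_cast; ring
        obtain ⟨p, q, u, v, heq, hpne, hqne, hlast, hhead, hp, hq, hsumeq⟩ :=
          chainSum_split (rhoOf 𝒰) (rhoOf_nonneg 𝒰) (a :: c :: t) (by simp) (S/2) (S/2)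
            (by linarith) (by linarith) (by linarith)
        have hllen : (a :: c :: t).length = p.length + q.length := by rw [heq]; simp
        have hplen : p.length ≤ m := by
          have hq1 : 1 ≤ q.length := List.length_pos_iff.mpr hqne
          simp only [List.length_cons] at hl hllen
          omega
        have hqlen : q.length ≤ m := by
          have hp1 : 1 ≤ p.length := List.length_pos_iff.mpr hpne
          simp only [List.length_cons] at hl hllen
          omega
        have hphead : p.head? = some a := by
          have hx : (p ++ q).head? = some a := by rw [← heq]; rfl
          rwa [List.head?_append_of_ne_nil _ hpne] at hx
        have hqlast : q.getLast? = some b := by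
          have hx : (p ++ q).getLast? = some b := by rw [← heq]; exact hb
          rwa [List.getLast?_append_of_ne_nil _ hqne] at hx
        have hppart : chainSum (rhoOf 𝒰) p < (2:ℝ) ^ (-(((n+1:ℕ)):ℤ)) := by
          rw [← hcast]; linarith
        have hqpart : chainSum (rhoOf 𝒰) q < (2:ℝ) ^ (-(((n+1:ℕ)):ℤ)) := by
          rw [← hcast]; linarith
        obtain ⟨U, hU, haU, huU⟩ := ih p hplen (n+1) a u hphead hlast hppart
        obtain ⟨W, hW, hvW, hbW⟩ := ih q hqlen (n+1) v b hhead hqlast hqpart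
        have hedge : rhoOf 𝒰 u v < (2:ℝ) ^ (-(n:ℤ)) := by
          have hp0 := chainSum_nonneg 𝒰 p
          have hq0 := chainSum_nonneg 𝒰 q
          have hle : rhoOf 𝒰 u v ≤ S := by rw [hSdef, hsumeq]; linarith
          linarith
        obtain ⟨V, hV, huV, hvV⟩ := rho_lt 𝒰 h hedge
        obtain ⟨T, hT, hstar⟩ := h.2 n V hV
        refine ⟨T, hT, ?_, ?_⟩
        · exact hstar ⟨U, ⟨hU, ⟨u, huU, huV⟩⟩, haU⟩
        · exact hstar ⟨W, ⟨hW, ⟨v, hvW, hvV⟩⟩, hbW⟩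

/-- For the pseudo-metric `d` associated to a normal sequence of covers `𝒰ₙ`:
`st({x}, 𝒰ₙ₊₁) ⊆ B_d(x, 2⁻ⁿ) ⊆ st({x}, 𝒰ₙ)` for every `x` and `n`. -/
theorem star_subset_ball_subset_star (𝒰 : ℕ → Set (Set X)) (h𝒰 : IsNormalSeq 𝒰)
    (x : X) (n : ℕ) :
    starOf {x} (𝒰 (n + 1)) ⊆ {y : X | dOf 𝒰 x y < (2 : ℝ) ^ (-(n : ℤ))} ∧
    {y : X | dOf 𝒰 x y < (2 : ℝ) ^ (-(n : ℤ))} ⊆ starOf {x} (𝒰 n) := by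
  constructor
  · intro y hy
    obtain ⟨U, ⟨hU, ⟨z, hzU, hzx⟩⟩, hyU⟩ := hy
    rw [Set.mem_singleton_iff] at hzx
    rw [hzx] at hzU
    have hmem : (n+1) ∈ sharedLevels 𝒰 x y := ⟨U, hU, hzU, hyU⟩
    have hrho : rhoOf 𝒰 x y < (2:ℝ) ^ (-(n:ℤ)) := by
      unfold rhoOf
      split_ifs with hB hne
      · have hle : n + 1 ≤ sSup (sharedLevels 𝒰 x y) := le_csSup hB hmem
        calc (2:ℝ) ^ (-((sSup (sharedLevels 𝒰 x y) : ℕ) : ℤ))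
            ≤ 2 ^ (-(((n+1:ℕ)):ℤ)) := zpow_le_zpow_right₀ (by norm_num) (by omega)
          _ < 2 ^ (-(n:ℤ)) := by
              apply zpow_lt_zpow_right₀ (by norm_num)
              omega
      · exact absurd ⟨n+1, hmem⟩ hne
      · positivity
    have hchain : rhoOf 𝒰 x y ∈ {s : ℝ | ∃ l : List X, l.head? = some x ∧
        l.getLast? = some y ∧ s = chainSum (rhoOf 𝒰) l} := by
      refine ⟨[x, y], rfl, by simp, ?_⟩
      simp [chainSum]
    have hbdd : BddBelow {s : ℝ | ∃ l : List X, l.head? = some x ∧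
        l.getLast? = some y ∧ s = chainSum (rhoOf 𝒰) l} := by
      refine ⟨0, fun s hs => ?_⟩
      obtain ⟨l, _, _, rfl⟩ := hs
      exact chainSum_nonneg 𝒰 l
    have : dOf 𝒰 x y ≤ rhoOf 𝒰 x y := csInf_le hbdd hchain
    exact lt_of_le_of_lt this hrho
  · intro y hy
    simp only [Set.mem_setOf_eq] at hy
    have hne : {s : ℝ | ∃ l : List X, l.head? = some x ∧
        l.getLast? = some y ∧ s = chainSum (rhoOf 𝒰) l}.Nonempty := by
      refine ⟨chainSum (rhoOf 𝒰) [x, y], [x, y], rfl, by simp, rfl⟩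
    obtain ⟨s, hs, hslt⟩ := exists_lt_of_csInf_lt hne hy
    obtain ⟨l, hhead, hlast, rfl⟩ := hs
    obtain ⟨U, hU, hxU, hyU⟩ := chain_key 𝒰 h𝒰 l.length l (le_refl _) n x y hhead hlast hslt
    exact ⟨U, ⟨hU, ⟨x, hxU, rfl⟩⟩, hyU⟩
end

section
/- Let q : G → H be a proper, continuous, surjective, Haar system preserving groupoid homomorphism between locally compact Hausdorff groupoids with Haar systems {μˣ} on G and {νʸ} on H. Then the pullback q* : C_c(H) → C_c(G) is isometric for the I-norms: ‖q*f‖_I = ‖f‖_I for all f ∈ C_c(H). -/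
open MeasureTheory

/-- A (topological) groupoid structure on a space `G` of arrows: source and target maps
`src, tgt : G → G` (with values the unit arrows), a partial multiplication `mul`
(meaningful on composable pairs, i.e. when `src g = tgt h`), and inversion, all
continuous (multiplication on the set of composable pairs). -/
structure TopGroupoid (G : Type*) [TopologicalSpace G] where
  src : G → G
  tgt : G → G
  mul : G → G → G
  inv : G → G
  continuous_src : Continuous src
  continuous_tgt : Continuous tgt
  continuous_inv : Continuous inv
  continuous_mul : ContinuousOn (fun p : G × G => mul p.1 p.2) {p : G × G | src p.1 = tgt p.2}
  inv_mul : ∀ g, mul (inv g) g = src g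
  mul_inv : ∀ g, mul g (inv g) = tgt g
  mul_src : ∀ g, mul g (src g) = g
  tgt_mul : ∀ g, mul (tgt g) g = g
  src_inv : ∀ g, src (inv g) = tgt g
  inv_inv : ∀ g, inv (inv g) = g
  src_mul : ∀ g h, src g = tgt h → src (mul g h) = src h
  tgt_mul_eq : ∀ g h, src g = tgt h → tgt (mul g h) = tgt g
  mul_assoc : ∀ g h k, src g = tgt h → src h = tgt k →
    mul (mul g h) k = mul g (mul h k)

namespace TopGroupoid

variable {G : Type*} [TopologicalSpace G]

/-- The unit space of a groupoid: the fixed points of the source map. -/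
def units (𝒢 : TopGroupoid G) : Set G := {x : G | 𝒢.src x = x}

end TopGroupoid

/-- A Haar system of measures on a topological groupoid: a family of regular Radon
measures `μˣ` indexed by the units, `μˣ` supported on the fiber `tgt⁻¹(x)`, varying
continuously against compactly supported continuous functions, and left-invariant. -/
structure IsHaarSystem {G : Type*} [TopologicalSpace G] [MeasurableSpace G] [BorelSpace G]
    (𝒢 : TopGroupoid G) (μ : G → Measure G) : Prop where
  regular : ∀ x ∈ 𝒢.units, (μ x).Regular
  supported : ∀ x ∈ 𝒢.units, μ x {g : G | 𝒢.tgt g ≠ x} = 0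
  continuous_integral : ∀ f : G → ℝ, Continuous f → HasCompactSupport f →
    ContinuousOn (fun x : G => ∫ g, f g ∂(μ x)) 𝒢.units
  left_invariant : ∀ g : G, ∀ f : G → ℝ, Continuous f → HasCompactSupport f →
    ∫ h, f h ∂(μ (𝒢.tgt g)) = ∫ h, f (𝒢.mul g h) ∂(μ (𝒢.src g))

/-- A (continuous) groupoid homomorphism between topological groupoids. -/
def IsGroupoidHom {G H : Type*} [TopologicalSpace G] [TopologicalSpace H]
    (𝒢 : TopGroupoid G) (ℋ : TopGroupoid H) (q : G → H) : Prop :=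
  Continuous q ∧
  (∀ g, q (𝒢.src g) = ℋ.src (q g)) ∧
  (∀ g, q (𝒢.tgt g) = ℋ.tgt (q g)) ∧
  (∀ g, q (𝒢.inv g) = ℋ.inv (q g)) ∧
  (∀ g h, 𝒢.src g = 𝒢.tgt h → q (𝒢.mul g h) = ℋ.mul (q g) (q h))

/-- The I-norm of a function on a groupoid with a Haar system. -/
noncomputable def Inorm {G : Type*} [TopologicalSpace G] [MeasurableSpace G]
    (𝒢 : TopGroupoid G) (μ : G → Measure G) (f : G → ℂ) : ENNReal :=
  max (⨆ x ∈ 𝒢.units, ∫⁻ g, ENNReal.ofReal ‖f g‖ ∂(μ x))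
      (⨆ x ∈ 𝒢.units, ∫⁻ g, ENNReal.ofReal ‖f (𝒢.inv g)‖ ∂(μ x))

/-- The pullback along a proper, continuous, surjective, Haar system preserving groupoid
homomorphism is isometric for the I-norms. -/
theorem pullback_Inorm_isometric
    {G H : Type*} [TopologicalSpace G] [T2Space G] [LocallyCompactSpace G]
    [MeasurableSpace G] [BorelSpace G]
    [TopologicalSpace H] [T2Space H] [LocallyCompactSpace H]
    [MeasurableSpace H] [BorelSpace H]
    (𝒢 : TopGroupoid G) (ℋ : TopGroupoid H)
    (μ : G → Measure G) (ν : H → Measure H)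
    (hμ : IsHaarSystem 𝒢 μ) (hν : IsHaarSystem ℋ ν)
    (q : G → H) (hhom : IsGroupoidHom 𝒢 ℋ q)
    (hproper : ∀ K : Set H, IsCompact K → IsCompact (q ⁻¹' K))
    (hsurj : Function.Surjective q)
    (hHaarPres : ∀ x ∈ 𝒢.units, Measure.map q (μ x) = ν (q x))
    (f : H → ℂ) (hf : Continuous f) (hfc : HasCompactSupport f) :
    Inorm 𝒢 μ (f ∘ q) = Inorm ℋ ν f := by
  obtain ⟨hqc, hsrc, htgt, hinv, hmul⟩ := hhom
  have hqm : Measurable q := hqc.measurable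
  have himg : q '' 𝒢.units = ℋ.units := by
    ext y
    constructor
    · rintro ⟨x, hx, rfl⟩
      show ℋ.src (q x) = q x
      rw [← hsrc]
      exact congrArg q hx
    · intro hy
      obtain ⟨g, rfl⟩ := hsurj y
      refine ⟨𝒢.src g, ?_, ?_⟩
      · show 𝒢.src (𝒢.src g) = 𝒢.src g
        conv_lhs => rw [← 𝒢.inv_mul g]
        rw [𝒢.src_mul _ _ (𝒢.src_inv g)]
      · rw [hsrc]; exact hy
  have key : ∀ φ : H → ℂ, Measurable φ →
      (⨆ x ∈ 𝒢.units, ∫⁻ g, ENNReal.ofReal ‖φ (q g)‖ ∂(μ x))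
        = ⨆ y ∈ ℋ.units, ∫⁻ h, ENNReal.ofReal ‖φ h‖ ∂(ν y) := by
    intro φ hφ
    rw [← himg, iSup_image]
    refine biSup_congr fun x hx => ?_
    rw [← hHaarPres x hx]
    exact (lintegral_map hφ.norm.ennreal_ofReal hqm).symm
  unfold Inorm
  congr 1
  · exact key f hf.measurable
  · have : ∀ g, ENNReal.ofReal ‖(f ∘ q) (𝒢.inv g)‖
        = ENNReal.ofReal ‖(f ∘ ℋ.inv) (q g)‖ := by
      intro g
      simp only [Function.comp_apply, hinv g]
    simp only [this]
    exact key (f ∘ ℋ.inv) (hf.measurable.comp ℋ.continuous_inv.measurable)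
end

section
/- Let q : G → H be a proper, continuous, surjective groupoid homomorphism between locally compact Hausdorff topological groupoids which is topologically a quotient map. Suppose G has a Haar system {μˣ : x ∈ G⁽⁰⁾} such that for all f ∈ C₀(H), all units z of H and all x, y ∈ q⁻¹(z) ∩ G⁽⁰⁾, ∫_G (f ∘ q) dμˣ = ∫_G (f ∘ q) dμʸ. Then H admits a Haar system {νᶻ : z ∈ H⁽⁰⁾} defined by νᶻ = q_*(μˣ) for any x ∈ q⁻¹(z), and q is Haar system preserving with respect to these systems. -/
open MeasureTheory

/-! By uniqueness in the Riesz–Markov–Kakutani theorem, the fiber condition tested against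
`C_c(H)` says that the regular measures `q_*(μˣ)` (regular because `q` is proper) depend only on
`q x`. Hence `g ↦ q_*(μ^{s(g)})` factors through `q` and defines `ν`. Support and left invariance
of `ν` are pulled back along the homomorphism `q`, and `z ↦ ∫ f dνᶻ` is continuous because its
composite with the quotient map `q` is `g ↦ ∫ f ∘ q dμ^{s(g)}`. -/

namespace TopGroupoid

variable {G : Type*} [TopologicalSpace G] (𝒢 : TopGroupoid G)

lemma src_src (g : G) : 𝒢.src (𝒢.src g) = 𝒢.src g := by
  have h := 𝒢.src_mul (𝒢.inv g) g (𝒢.src_inv g)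
  rwa [𝒢.inv_mul] at h

lemma src_mem_units (g : G) : 𝒢.src g ∈ 𝒢.units := 𝒢.src_src g

lemma tgt_inv (g : G) : 𝒢.tgt (𝒢.inv g) = 𝒢.src g := by
  simpa only [𝒢.inv_inv] using (𝒢.src_inv (𝒢.inv g)).symm

lemma src_tgt (g : G) : 𝒢.src (𝒢.tgt g) = 𝒢.tgt g := by
  have h := 𝒢.src_mul g (𝒢.inv g) (𝒢.tgt_inv g).symm
  rwa [𝒢.mul_inv, 𝒢.src_inv] at h

lemma continuousOn_mul_left (g : G) : ContinuousOn (𝒢.mul g) {h | 𝒢.tgt h = 𝒢.src g} :=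
  𝒢.continuous_mul.comp (continuous_const.prodMk continuous_id).continuousOn
    fun _ hh => hh.symm

end TopGroupoid

namespace IsGroupoidHom

variable {G H : Type*} [TopologicalSpace G] [TopologicalSpace H]
  {𝒢 : TopGroupoid G} {ℋ : TopGroupoid H} {q : G → H}

lemma continuous (hq : IsGroupoidHom 𝒢 ℋ q) : Continuous q := hq.1

lemma map_src (hq : IsGroupoidHom 𝒢 ℋ q) (g : G) : q (𝒢.src g) = ℋ.src (q g) := hq.2.1 g

lemma map_tgt (hq : IsGroupoidHom 𝒢 ℋ q) (g : G) : q (𝒢.tgt g) = ℋ.tgt (q g) := hq.2.2.1 g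

lemma map_mul (hq : IsGroupoidHom 𝒢 ℋ q) {g h : G} (hgh : 𝒢.src g = 𝒢.tgt h) :
    q (𝒢.mul g h) = ℋ.mul (q g) (q h) :=
  hq.2.2.2.2 g h hgh

lemma map_mem_units (hq : IsGroupoidHom 𝒢 ℋ q) {x : G} (hx : x ∈ 𝒢.units) : q x ∈ ℋ.units := by
  have h : q (𝒢.src x) = ℋ.src (q x) := hq.map_src x
  rw [show 𝒢.src x = x from hx] at h
  exact h.symm

end IsGroupoidHom

lemma HasCompactSupport.comp_isProperMap {X Y M : Type*} [TopologicalSpace X]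
    [TopologicalSpace Y] [Zero M] {f : Y → M} (hf : HasCompactSupport f) {q : X → Y}
    (hq : IsProperMap q) :
    HasCompactSupport (f ∘ q) :=
  (hq.isCompact_preimage hf).of_isClosed_subset (isClosed_tsupport _)
    (tsupport_comp_subset_preimage f hq.continuous)

lemma ContinuousOn.aestronglyMeasurable_of_ae_mem {X β : Type*} [TopologicalSpace X]
    [MeasurableSpace X] [OpensMeasurableSpace X] [TopologicalSpace β]
    [TopologicalSpace.PseudoMetrizableSpace β]
    [SecondCountableTopologyEither X β] {μ : Measure X} {f : X → β} {s : Set X}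
    (hf : ContinuousOn f s) (hs : MeasurableSet s) (h : ∀ᵐ x ∂μ, x ∈ s) :
    AEStronglyMeasurable f μ := by
  simpa only [Measure.restrict_eq_self_of_ae_mem h] using hf.aestronglyMeasurable (μ := μ) hs

namespace MeasureTheory.Measure

variable {X Y : Type*} [TopologicalSpace X] [MeasurableSpace X] [BorelSpace X]
  [TopologicalSpace Y] [T2Space Y] [MeasurableSpace Y] [BorelSpace Y] {q : X → Y}

lemma Regular.map_of_isProperMap {μ : Measure X} (hμ : μ.Regular) (hq : IsProperMap q) :
    (μ.map q).Regular := by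
  have hqm : Measurable q := hq.continuous.measurable
  refine
    { lt_top_of_isCompact := fun {K} hK => ?_
      outerRegular := fun A hA r hr => ?_
      innerRegular := hμ.innerRegular.map hqm.aemeasurable
        (fun U hU => hU.preimage hq.continuous) (fun K hK => hK.image hq.continuous)
        (fun U hU => hU.measurableSet) }
  · rw [map_apply hqm hK.measurableSet]
    exact (hq.isCompact_preimage hK).measure_lt_top
  · rw [map_apply hqm hA] at hr
    obtain ⟨V, hAV, hVo, hV⟩ := Set.exists_isOpen_lt_of_lt (q ⁻¹' A) r hr
    -- the points whose whole fiber lies in `V`: an open set since `q` is closed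
    have hW : IsOpen (q '' Vᶜ)ᶜ := (hq.isClosedMap _ hVo.isClosed_compl).isOpen_compl
    refine ⟨(q '' Vᶜ)ᶜ, fun y hy ⟨x, hx, hxy⟩ => hx (hAV (show q x ∈ A from hxy ▸ hy)), hW, ?_⟩
    rw [map_apply hqm hW.measurableSet]
    refine lt_of_le_of_lt (measure_mono fun x hx => ?_) hV
    by_contra hxV
    exact hx (Set.mem_image_of_mem q hxV)

variable [LocallyCompactSpace Y]

lemma map_eq_map_of_integral_comp_eq {μ ν : Measure X} (hμ : μ.Regular) (hν : ν.Regular)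
    (hq : IsProperMap q)
    (h : ∀ f : Y → ℝ, Continuous f → HasCompactSupport f → ∫ x, f (q x) ∂μ = ∫ x, f (q x) ∂ν) :
    μ.map q = ν.map q := by
  have := hμ.map_of_isProperMap hq
  have := hν.map_of_isProperMap hq
  refine ext_of_integral_eq_on_compactlySupported fun f => ?_
  have hqm : Measurable q := hq.continuous.measurable
  rw [integral_map hqm.aemeasurable (map_continuous f).aestronglyMeasurable,
    integral_map hqm.aemeasurable (map_continuous f).aestronglyMeasurable]
  exact h f f.continuous f.hasCompactSupport

end MeasureTheory.Measure

namespace IsHaarSystem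

variable {G H : Type*} [TopologicalSpace G] [MeasurableSpace G] [BorelSpace G]
  [TopologicalSpace H] [T2Space H] [MeasurableSpace H] [BorelSpace H]
  {𝒢 : TopGroupoid G} {ℋ : TopGroupoid H} {μ : G → Measure G} {q : G → H}

lemma ae_tgt_eq (hμ : IsHaarSystem 𝒢 μ) {x : G} (hx : x ∈ 𝒢.units) :
    ∀ᵐ g ∂μ x, 𝒢.tgt g = x :=
  ae_iff.2 (hμ.supported x hx)

lemma ae_tgt_map_eq (hμ : IsHaarSystem 𝒢 μ) (hq : IsGroupoidHom 𝒢 ℋ q) {x : G}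
    (hx : x ∈ 𝒢.units) : ∀ᵐ k ∂(μ x).map q, ℋ.tgt k = q x := by
  rw [ae_map_iff hq.continuous.aemeasurable
    (isClosed_eq ℋ.continuous_tgt continuous_const).measurableSet]
  filter_upwards [hμ.ae_tgt_eq hx] with g hg
  rw [← hq.map_tgt, hg]

lemma left_invariant_map (hμ : IsHaarSystem 𝒢 μ) (hq : IsGroupoidHom 𝒢 ℋ q)
    (hproper : IsProperMap q) (g : G) {f : H → ℝ} (hf : Continuous f)
    (hfc : HasCompactSupport f) :
    ∫ k, f k ∂(μ (𝒢.tgt g)).map q = ∫ k, f (ℋ.mul (q g) k) ∂(μ (𝒢.src g)).map q := by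
  have hqm : Measurable q := hq.continuous.measurable
  have hmul : AEStronglyMeasurable (fun k => f (ℋ.mul (q g) k)) ((μ (𝒢.src g)).map q) := by
    refine (hf.comp_continuousOn (ℋ.continuousOn_mul_left (q g))).aestronglyMeasurable_of_ae_mem
      (isClosed_eq ℋ.continuous_tgt continuous_const).measurableSet ?_
    filter_upwards [hμ.ae_tgt_map_eq hq (𝒢.src_mem_units g)] with k hk
    rw [hk, hq.map_src]
  rw [integral_map hqm.aemeasurable hf.aestronglyMeasurable, integral_map hqm.aemeasurable hmul,
    hμ.left_invariant g (fun h => f (q h)) (hf.comp hq.continuous) (hfc.comp_isProperMap hproper)]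
  refine integral_congr_ae ?_
  filter_upwards [hμ.ae_tgt_eq (𝒢.src_mem_units g)] with h hh
  rw [hq.map_mul hh.symm]

lemma of_map_eq (hμ : IsHaarSystem 𝒢 μ) (hq : IsGroupoidHom 𝒢 ℋ q) (hproper : IsProperMap q)
    (hsurj : Function.Surjective q) {ν : H → Measure H}
    (hν : ∀ g, ν (q g) = (μ (𝒢.src g)).map q) : IsHaarSystem ℋ ν where
  regular := by
    rintro z -
    obtain ⟨g, rfl⟩ := hsurj z
    rw [hν]
    exact (hμ.regular _ (𝒢.src_mem_units g)).map_of_isProperMap hproper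
  supported := by
    rintro z hz
    obtain ⟨g, rfl⟩ := hsurj z
    have h := hμ.ae_tgt_map_eq hq (𝒢.src_mem_units g)
    rw [hq.map_src, show ℋ.src (q g) = q g from hz] at h
    rw [hν]
    exact ae_iff.1 h
  continuous_integral := by
    intro f hf hfc
    refine Continuous.continuousOn ?_
    rw [(hproper.isClosedMap.isQuotientMap hproper.continuous hsurj).continuous_iff]
    have hcomp : (fun z => ∫ k, f k ∂ν z) ∘ q = (fun x => ∫ g, f (q g) ∂μ x) ∘ 𝒢.src := by
      ext g
      simp only [Function.comp_apply, hν,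
        integral_map hq.continuous.aemeasurable hf.aestronglyMeasurable]
    rw [hcomp]
    exact (hμ.continuous_integral _ (hf.comp hq.continuous)
      (hfc.comp_isProperMap hproper)).comp_continuous 𝒢.continuous_src 𝒢.src_mem_units
  left_invariant := by
    intro k f hf hfc
    obtain ⟨g, rfl⟩ := hsurj k
    rw [← hq.map_tgt, ← hq.map_src, hν, hν, 𝒢.src_tgt, 𝒢.src_src]
    exact hμ.left_invariant_map hq hproper g hf hfc

end IsHaarSystem

theorem haar_system_pushes_to_quotient_general
    {G H : Type*} [TopologicalSpace G]
    [MeasurableSpace G] [BorelSpace G]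
    [TopologicalSpace H] [T2Space H] [LocallyCompactSpace H]
    [MeasurableSpace H] [BorelSpace H]
    (𝒢 : TopGroupoid G) (ℋ : TopGroupoid H)
    (q : G → H) (hhom : IsGroupoidHom 𝒢 ℋ q)
    (hproper : ∀ K : Set H, IsCompact K → IsCompact (q ⁻¹' K))
    (hsurj : Function.Surjective q)
    (μ : G → Measure G) (hμ : IsHaarSystem 𝒢 μ)
    (hfibers : ∀ f : H → ℝ, Continuous f → Filter.Tendsto f (Filter.cocompact H) (nhds 0) →
      ∀ z ∈ ℋ.units, ∀ x ∈ 𝒢.units, ∀ y ∈ 𝒢.units, q x = z → q y = z →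
        ∫ g, f (q g) ∂(μ x) = ∫ g, f (q g) ∂(μ y)) :
    ∃ ν : H → Measure H, IsHaarSystem ℋ ν ∧
      ∀ x ∈ 𝒢.units, Measure.map q (μ x) = ν (q x) := by
  have hq : IsProperMap q :=
    isProperMap_iff_isCompact_preimage.2 ⟨hhom.continuous, fun K hK => hproper K hK⟩
  have hfactors : (fun g => (μ (𝒢.src g)).map q).FactorsThrough q := by
    intro g g' hgg'
    have hsrc : q (𝒢.src g) = q (𝒢.src g') := by rw [hhom.map_src, hhom.map_src, hgg']
    refine Measure.map_eq_map_of_integral_comp_eq (hμ.regular _ (𝒢.src_mem_units g))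
      (hμ.regular _ (𝒢.src_mem_units g')) hq fun f hf hfc => ?_
    exact hfibers f hf hfc.is_zero_at_infty _ (hhom.map_mem_units (𝒢.src_mem_units g)) _
      (𝒢.src_mem_units g) _ (𝒢.src_mem_units g') rfl hsrc.symm
  refine ⟨Function.extend q (fun g => (μ (𝒢.src g)).map q) 0,
    hμ.of_map_eq hhom hq hsurj (hfactors.extend_apply 0), fun x hx => ?_⟩
  rw [hfactors.extend_apply, show 𝒢.src x = x from hx]

/-- Pushing a Haar system to a quotient: if `q : G → H` is a proper, continuous,
surjective groupoid homomorphism which is a topological quotient map, and the Haar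
system `{μˣ}` on `G` satisfies `∫ (f ∘ q) dμˣ = ∫ (f ∘ q) dμʸ` for all `f ∈ C₀(H)`
and all units `x, y` in the same fiber of `q`, then `H` admits a Haar system
`{νᶻ}` with `νᶻ = q_*(μˣ)` for any `x ∈ q⁻¹(z)`, making `q` Haar system preserving. -/
theorem haar_system_pushes_to_quotient
    {G H : Type*} [TopologicalSpace G] [T2Space G] [LocallyCompactSpace G]
    [MeasurableSpace G] [BorelSpace G]
    [TopologicalSpace H] [T2Space H] [LocallyCompactSpace H]
    [MeasurableSpace H] [BorelSpace H]
    (𝒢 : TopGroupoid G) (ℋ : TopGroupoid H)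
    (q : G → H) (hhom : IsGroupoidHom 𝒢 ℋ q)
    (hproper : ∀ K : Set H, IsCompact K → IsCompact (q ⁻¹' K))
    (hsurj : Function.Surjective q)
    (hquot : Topology.IsQuotientMap q)
    (μ : G → Measure G) (hμ : IsHaarSystem 𝒢 μ)
    (hfibers : ∀ f : H → ℝ, Continuous f → Filter.Tendsto f (Filter.cocompact H) (nhds 0) →
      ∀ z ∈ ℋ.units, ∀ x ∈ 𝒢.units, ∀ y ∈ 𝒢.units, q x = z → q y = z →
        ∫ g, f (q g) ∂(μ x) = ∫ g, f (q g) ∂(μ y)) :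
    ∃ ν : H → Measure H, IsHaarSystem ℋ ν ∧
      ∀ x ∈ 𝒢.units, Measure.map q (μ x) = ν (q x) :=
  haar_system_pushes_to_quotient_general 𝒢 ℋ q hhom hproper hsurj μ hμ hfibers
end
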